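/- arXiv:1005.5142 — 9 statements merged into one kernel-verified Lean document; each statement's English description precedes it below -/
import Mathlib

section
/- Let μ be a finite measure on a measurable space (S, 𝒮) and V ⊆ S. Define, for E in the σ-algebra 𝒮_V generated by 𝒮 and V, μ̲(E) = μᵢ(E ∩ V) + μₑ(E ∩ Vᶜ), where μᵢ and μₑ are the inner and outer measures induced by μ. Then μ̲ is a (countably additive) measure on (S, 𝒮_V) extending μ, and μ̲(V) = μᵢ(V). -/
open MeasureTheory Set
open scoped ENNReal

/-- The inner measure induced by μ: sup of measures of measurable subsets. -/
noncomputable def innerM {S : Type*} (m : MeasurableSpace S) (μ : @Measure S m)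
    (A : Set S) : ℝ≥0∞ :=
  ⨆ (M : Set S) (_ : MeasurableSet[m] M ∧ M ⊆ A), μ M

/-- The outer measure induced by μ: inf of measures of measurable supersets. -/
noncomputable def outerM {S : Type*} (m : MeasurableSpace S) (μ : @Measure S m)
    (A : Set S) : ℝ≥0∞ :=
  ⨅ (M : Set S) (_ : MeasurableSet[m] M ∧ A ⊆ M), μ M

/-- μ̲(E) = μᵢ(E ∩ V) + μₑ(E ∩ Vᶜ) defines a measure on 𝒮_V
extending μ, with μ̲(V) = μᵢ(V). -/
theorem lower_extension_is_measure {S : Type*} (m : MeasurableSpace S)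
    (μ : @Measure S m) (_hfin : @IsFiniteMeasure S m μ) (V : Set S) :
    ∃ ν : @Measure S (m ⊔ MeasurableSpace.generateFrom {V}),
      (∀ E : Set S, MeasurableSet[m ⊔ MeasurableSpace.generateFrom {V}] E →
        ν E = innerM m μ (E ∩ V) + outerM m μ (E ∩ Vᶜ)) ∧
      (∀ B : Set S, MeasurableSet[m] B → ν B = μ B) ∧
      ν V = innerM m μ V := by
  classical
  haveI := _hfin
  set H := toMeasurable μ Vᶜ with hHdef
  have hHm : MeasurableSet[m] H := measurableSet_toMeasurable μ _
  have hVH : Vᶜ ⊆ H := subset_toMeasurable μ _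
  have hKV : Hᶜ ⊆ V := fun x hx => by
    by_contra h; exact hx (hVH h)
  have hHμ : μ H = μ Vᶜ := measure_toMeasurable _
  -- minimality of the hull H
  have hHmin : ∀ N : Set S, MeasurableSet[m] N → Vᶜ ⊆ N → μ (H \ N) = 0 := by
    intro N hN hVN
    have h1 : μ (H ∩ N) = μ H := le_antisymm (measure_mono inter_subset_left)
      (by rw [hHμ]; exact measure_mono (subset_inter hVH hVN))
    have h2 := measure_inter_add_diff (μ := μ) H hN
    rw [h1] at h2
    have h3 : μ H + μ (H \ N) = μ H + 0 := by rw [add_zero]; exact h2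
    exact (ENNReal.add_right_inj (measure_ne_top μ H)).mp h3
  -- inner measure formula
  have hInner : ∀ A : Set S, MeasurableSet[m] A → innerM m μ (A ∩ V) = μ (A ∩ Hᶜ) := by
    intro A hAm
    apply le_antisymm
    · refine iSup_le fun M => iSup_le fun hM => ?_
      obtain ⟨hMm, hMs⟩ := hM
      have h0 : μ (M ∩ H) = 0 := by
        have := hHmin Mᶜ hMm.compl
          (compl_subset_compl.mpr (hMs.trans inter_subset_right))
        rwa [diff_compl, inter_comm] at this
      calc μ M = μ (M ∩ H) + μ (M \ H) := (measure_inter_add_diff M hHm).symm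
        _ = μ (M \ H) := by rw [h0, zero_add]
        _ ≤ μ (A ∩ Hᶜ) := measure_mono (fun x hx => ⟨(hMs hx.1).1, hx.2⟩)
    · exact le_iSup_of_le (A ∩ Hᶜ) (le_iSup_of_le
        ⟨hAm.inter hHm.compl, fun x hx => ⟨hx.1, hKV hx.2⟩⟩ le_rfl)
  -- outer measure formula
  have hOuter : ∀ B : Set S, MeasurableSet[m] B → outerM m μ (B ∩ Vᶜ) = μ (B ∩ H) := by
    intro B hBm
    apply le_antisymm
    · exact iInf_le_of_le (B ∩ H) (iInf_le_of_le
        ⟨hBm.inter hHm, fun x hx => ⟨hx.1, hVH hx.2⟩⟩ le_rfl)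
    · refine le_iInf fun N => le_iInf fun hN => ?_
      obtain ⟨hNm, hNs⟩ := hN
      have hsub : Vᶜ ⊆ N ∪ Bᶜ := by
        intro x hx
        by_cases hxB : x ∈ B
        · exact Or.inl (hNs ⟨hxB, hx⟩)
        · exact Or.inr hxB
      have h0 : μ (H \ (N ∪ Bᶜ)) = 0 := hHmin _ (hNm.union hBm.compl) hsub
      calc μ (B ∩ H) ≤ μ (N ∪ H \ (N ∪ Bᶜ)) := measure_mono (by
            intro x hx
            by_cases hxN : x ∈ N
            · exact Or.inl hxN
            · exact Or.inr ⟨hx.2, fun h => h.elim hxN (fun hb => hb hx.1)⟩)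
        _ ≤ μ N + μ (H \ (N ∪ Bᶜ)) := measure_union_le _ _
        _ = μ N := by rw [h0, add_zero]
  -- representation of sets in the enlarged σ-algebra
  have hkey : ∀ (W E A : Set S), E ∩ W = A ∩ W → Eᶜ ∩ W = Aᶜ ∩ W := by
    intro W E A h; ext x
    have := Set.ext_iff.mp h x
    simp only [mem_inter_iff, mem_compl_iff] at *
    tauto
  have hrep : ∀ E : Set S, MeasurableSet[(m ⊔ MeasurableSpace.generateFrom {V})] E →
      (∃ A, MeasurableSet[m] A ∧ E ∩ V = A ∩ V) ∧
      (∃ B, MeasurableSet[m] B ∧ E ∩ Vᶜ = B ∩ Vᶜ) := by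
    have hle : m ⊔ MeasurableSpace.generateFrom {V} ≤
        { MeasurableSet' := fun E => (∃ A, MeasurableSet[m] A ∧ E ∩ V = A ∩ V) ∧
            (∃ B, MeasurableSet[m] B ∧ E ∩ Vᶜ = B ∩ Vᶜ)
          measurableSet_empty :=
            ⟨⟨∅, MeasurableSet.empty, by simp⟩, ⟨∅, MeasurableSet.empty, by simp⟩⟩
          measurableSet_compl := by
            rintro E ⟨⟨A, hA, hAe⟩, ⟨B, hB, hBe⟩⟩
            exact ⟨⟨Aᶜ, hA.compl, hkey _ _ _ hAe⟩, ⟨Bᶜ, hB.compl, hkey _ _ _ hBe⟩⟩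
          measurableSet_iUnion := by
            intro g hg
            choose A hA hAe using fun i => (hg i).1
            choose B hB hBe using fun i => (hg i).2
            refine ⟨⟨⋃ i, A i, MeasurableSet.iUnion hA, ?_⟩,
              ⟨⋃ i, B i, MeasurableSet.iUnion hB, ?_⟩⟩
            · rw [iUnion_inter, iUnion_inter]; exact iUnion_congr hAe
            · rw [iUnion_inter, iUnion_inter]; exact iUnion_congr hBe } := by
      refine sup_le (fun s hs => ⟨⟨s, hs, rfl⟩, ⟨s, hs, rfl⟩⟩)
        (MeasurableSpace.generateFrom_le ?_)
      intro s hs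
      rw [mem_singleton_iff] at hs
      subst hs
      exact ⟨⟨univ, MeasurableSet.univ, by simp⟩, ⟨∅, MeasurableSet.empty, by simp⟩⟩
    exact fun E hE => hle E hE
  -- the empty set
  have hinner_empty : innerM m μ ∅ = 0 := le_antisymm
    (iSup_le fun M => iSup_le fun hM => by rw [subset_empty_iff.mp hM.2]; simp)
    zero_le
  have houter_empty : outerM m μ ∅ = 0 := le_antisymm
    (iInf_le_of_le ∅ (iInf_le_of_le ⟨MeasurableSet.empty, Subset.rfl⟩ (by simp)))
    zero_le
  have h0 : innerM m μ (∅ ∩ V) + outerM m μ (∅ ∩ Vᶜ) = 0 := by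
    rw [empty_inter, empty_inter, hinner_empty, houter_empty, add_zero]
  -- countable additivity
  have hadd : ∀ f : ℕ → Set S, (∀ i, MeasurableSet[(m ⊔ MeasurableSpace.generateFrom {V})] (f i)) →
      Pairwise (Function.onFun Disjoint f) →
      innerM m μ ((⋃ i, f i) ∩ V) + outerM m μ ((⋃ i, f i) ∩ Vᶜ) =
        ∑' i, (innerM m μ (f i ∩ V) + outerM m μ (f i ∩ Vᶜ)) := by
    intro f hmf hdisj
    choose A hA hAe using fun i => (hrep _ (hmf i)).1
    choose B hB hBe using fun i => (hrep _ (hmf i)).2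
    -- inner part
    have hAK : ∀ i, A i ∩ Hᶜ ⊆ f i ∩ V := by
      intro i x hx
      rw [hAe i]
      exact ⟨hx.1, hKV hx.2⟩
    have hdisjA : Pairwise (Function.onFun Disjoint fun i => A i ∩ Hᶜ) := fun i j hij =>
      (hdisj hij).mono ((hAK i).trans inter_subset_left)
        ((hAK j).trans inter_subset_left)
    have hinnerU : innerM m μ ((⋃ i, f i) ∩ V) = ∑' i, innerM m μ (f i ∩ V) := by
      have hU : (⋃ i, f i) ∩ V = (⋃ i, A i) ∩ V := by
        rw [iUnion_inter, iUnion_inter]; exact iUnion_congr hAe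
      rw [hU, hInner _ (MeasurableSet.iUnion hA), iUnion_inter,
        measure_iUnion hdisjA (fun i => (hA i).inter hHm.compl)]
      exact tsum_congr fun i => by rw [hAe i, hInner _ (hA i)]
    -- outer part: disjointify the B's
    set B' : ℕ → Set S := fun i => B i \ ⋃ j, ⋃ _ : j < i, B j with hB'def
    have hB'm : ∀ i, MeasurableSet[m] (B' i) := fun i =>
      (hB i).diff (MeasurableSet.iUnion fun j => MeasurableSet.iUnion fun _ => hB j)
    have hB'e : ∀ i, f i ∩ Vᶜ = B' i ∩ Vᶜ := by
      intro i; ext x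
      simp only [hB'def, mem_inter_iff, mem_diff, mem_iUnion, mem_compl_iff,
        not_exists]
      constructor
      · rintro ⟨hxf, hxV⟩
        have hxB : x ∈ B i ∩ Vᶜ := by rw [← hBe i]; exact ⟨hxf, hxV⟩
        refine ⟨⟨hxB.1, fun j hj hxBj => ?_⟩, hxV⟩
        have hxfj : x ∈ f j ∩ Vᶜ := by rw [hBe j]; exact ⟨hxBj, hxV⟩
        exact Set.disjoint_left.mp (hdisj hj.ne') hxf hxfj.1
      · rintro ⟨⟨hxB, _⟩, hxV⟩
        have : x ∈ f i ∩ Vᶜ := by rw [hBe i]; exact ⟨hxB, hxV⟩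
        exact ⟨this.1, hxV⟩
    have hB'lt : ∀ i j : ℕ, i < j → Disjoint (B' i) (B' j) := by
      intro i j hij
      refine Set.disjoint_left.mpr fun x hxi hxj => ?_
      have : x ∉ ⋃ k, ⋃ _ : k < j, B k := hxj.2
      exact this (mem_iUnion.mpr ⟨i, mem_iUnion.mpr ⟨hij, hxi.1⟩⟩)
    have hB'disj : Pairwise (Function.onFun Disjoint B') := by
      intro i j hij
      rcases lt_or_gt_of_ne hij with h | h
      · exact hB'lt i j h
      · exact (hB'lt j i h).symm
    have hB'U : ⋃ i, B' i = ⋃ i, B i := by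
      apply Subset.antisymm
      · exact iUnion_mono fun i => diff_subset
      · intro x hx
        rw [mem_iUnion] at hx ⊢
        obtain ⟨i, hi⟩ := hx
        have hex : ∃ i, x ∈ B i := ⟨i, hi⟩
        refine ⟨Nat.find hex, Nat.find_spec hex, ?_⟩
        simp only [mem_iUnion, not_exists]
        exact fun j hj => Nat.find_min hex hj
    have houterU : outerM m μ ((⋃ i, f i) ∩ Vᶜ) = ∑' i, outerM m μ (f i ∩ Vᶜ) := by
      have hU : (⋃ i, f i) ∩ Vᶜ = (⋃ i, B' i) ∩ Vᶜ := by
        rw [iUnion_inter, iUnion_inter]; exact iUnion_congr hB'e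
      have hdisjBH : Pairwise (Function.onFun Disjoint fun i => B' i ∩ H) := fun i j hij =>
        (hB'disj hij).mono inter_subset_left inter_subset_left
      rw [hU, hOuter _ (MeasurableSet.iUnion hB'm), iUnion_inter,
        measure_iUnion hdisjBH (fun i => (hB'm i).inter hHm)]
      exact tsum_congr fun i => by rw [hB'e i, hOuter _ (hB'm i)]
    rw [hinnerU, houterU, ENNReal.tsum_add]
  -- build the measure
  refine ⟨@Measure.ofMeasurable S (m ⊔ MeasurableSpace.generateFrom {V})
    (fun E _ => innerM m μ (E ∩ V) + outerM m μ (E ∩ Vᶜ)) h0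
    (fun f hf hd => hadd f hf hd), ?_, ?_, ?_⟩
  · intro E hE
    exact @Measure.ofMeasurable_apply S (m ⊔ MeasurableSpace.generateFrom {V}) _ _ _ E hE
  · intro Bs hBs
    have hBs' : MeasurableSet[(m ⊔ MeasurableSpace.generateFrom {V})] Bs := le_sup_left (a := m)
      (b := MeasurableSpace.generateFrom {V}) Bs hBs
    rw [@Measure.ofMeasurable_apply S (m ⊔ MeasurableSpace.generateFrom {V}) _ _ _ Bs hBs', hInner _ hBs, hOuter _ hBs,
      ← Set.diff_eq, add_comm]
    exact measure_inter_add_diff Bs hHm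
  · have hVm' : MeasurableSet[(m ⊔ MeasurableSpace.generateFrom {V})] V :=
      le_sup_right (a := m) (b := MeasurableSpace.generateFrom {V}) V
        (MeasurableSpace.measurableSet_generateFrom (mem_singleton V))
    rw [@Measure.ofMeasurable_apply S (m ⊔ MeasurableSpace.generateFrom {V}) _ _ _ V hVm', inter_self,
      inter_compl_self, houter_empty, add_zero]
end

section
/- Let μ be a finite measure on a measurable space (S, 𝒮) and V ⊆ S. Define, for E ∈ 𝒮_V, μ̄(E) = μₑ(E ∩ V) + μᵢ(E ∩ Vᶜ). Then μ̄ is a measure on (S, 𝒮_V) extending μ with μ̄(V) = μₑ(V). -/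
open MeasureTheory Set
open scoped ENNReal

section aux

variable {S : Type*} (m : MeasurableSpace S) (μ : @Measure S m) (V : Set S)

lemma outerM_eq (T : Set S) : outerM m μ T = μ T := by
  rw [measure_eq_iInf]
  unfold outerM
  apply le_antisymm
  · exact le_iInf fun t => le_iInf fun hsub => le_iInf fun hmeas =>
      iInf_le_of_le t (iInf_le_of_le ⟨hmeas, hsub⟩ le_rfl)
  · exact le_iInf fun t => le_iInf fun h =>
      iInf_le_of_le t (iInf_le_of_le h.2 (iInf_le _ h.1))

lemma rep (E : Set S) (hE : MeasurableSet[m ⊔ MeasurableSpace.generateFrom {V}] E) :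
    ∃ A B, MeasurableSet[m] A ∧ MeasurableSet[m] B ∧ E ∩ V = A ∩ V ∧ E ∩ Vᶜ = B ∩ Vᶜ := by
  let P : Set S → Prop := fun E => ∃ A B, MeasurableSet[m] A ∧ MeasurableSet[m] B ∧
      E ∩ V = A ∩ V ∧ E ∩ Vᶜ = B ∩ Vᶜ
  let m' : MeasurableSpace S :=
    { MeasurableSet' := P
      measurableSet_empty := ⟨∅, ∅, MeasurableSet.empty, MeasurableSet.empty, rfl, rfl⟩
      measurableSet_compl := by
        rintro E ⟨A, B, hA, hB, h1, h2⟩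
        refine ⟨Aᶜ, Bᶜ, hA.compl, hB.compl, ?_, ?_⟩
        · ext x
          have := Set.ext_iff.mp h1 x
          simp only [mem_inter_iff, mem_compl_iff] at this ⊢
          tauto
        · ext x
          have := Set.ext_iff.mp h2 x
          simp only [mem_inter_iff, mem_compl_iff] at this ⊢
          tauto
      measurableSet_iUnion := by
        intro f hf
        choose A B hA hB h1 h2 using hf
        refine ⟨⋃ i, A i, ⋃ i, B i, MeasurableSet.iUnion hA, MeasurableSet.iUnion hB, ?_, ?_⟩
        · rw [iUnion_inter, iUnion_inter]
          exact iUnion_congr h1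
        · rw [iUnion_inter, iUnion_inter]
          exact iUnion_congr h2 }
  have hle : m ⊔ MeasurableSpace.generateFrom {V} ≤ m' := by
    refine sup_le (fun s hs => ⟨s, s, hs, hs, rfl, rfl⟩) ?_
    refine MeasurableSpace.generateFrom_le ?_
    rintro s rfl
    · exact ⟨univ, ∅, @MeasurableSet.univ S m, @MeasurableSet.empty S m, by simp, by simp⟩
  exact hle E hE

variable [IsFiniteMeasure μ]

lemma outer_part {A : Set S} (hA : MeasurableSet[m] A) :
    outerM m μ (A ∩ V) = μ (A ∩ toMeasurable μ V) := by
  rw [outerM_eq, inter_comm A V, inter_comm A (toMeasurable μ V)]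
  exact (Measure.measure_toMeasurable_inter hA (measure_ne_top μ V)).symm

lemma inner_part {B : Set S} (hB : MeasurableSet[m] B) :
    innerM m μ (B ∩ Vᶜ) = μ (B ∩ (toMeasurable μ V)ᶜ) := by
  have hWc : (toMeasurable μ V)ᶜ ⊆ Vᶜ := compl_subset_compl.mpr (subset_toMeasurable μ V)
  apply le_antisymm
  · refine iSup_le fun M => iSup_le fun hM => ?_
    have h0 : μ (M ∩ toMeasurable μ V) = 0 := by
      rw [inter_comm, Measure.measure_toMeasurable_inter hM.1 (measure_ne_top μ V)]
      have : V ∩ M = ∅ := by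
        apply eq_empty_of_subset_empty
        intro x hx
        exact (hM.2 hx.2).2 hx.1
      simp [this]
    calc μ M = μ (M ∩ toMeasurable μ V) + μ (M \ toMeasurable μ V) :=
          (measure_inter_add_diff M (measurableSet_toMeasurable μ V)).symm
      _ = μ (M \ toMeasurable μ V) := by rw [h0, zero_add]
      _ ≤ μ (B ∩ (toMeasurable μ V)ᶜ) := by
          apply measure_mono
          rw [diff_eq]
          exact inter_subset_inter_left _ (fun x hx => (hM.2 hx).1)
  · exact le_iSup_of_le (B ∩ (toMeasurable μ V)ᶜ)
      (le_iSup_of_le ⟨hB.inter (measurableSet_toMeasurable μ V).compl,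
        inter_subset_inter_right B hWc⟩ le_rfl)

omit [IsFiniteMeasure μ] in
lemma innerM_empty : innerM m μ ∅ = 0 := by
  refine le_antisymm (iSup_le fun M => iSup_le fun hM => ?_) (zero_le)
  rw [subset_empty_iff.mp hM.2]
  simp

end aux

/-- μ̄(E) = μₑ(E ∩ V) + μᵢ(E ∩ Vᶜ) defines a measure on 𝒮_V
extending μ, with μ̄(V) = μₑ(V). -/
theorem upper_extension_is_measure {S : Type*} (m : MeasurableSpace S)
    (μ : @Measure S m) (_hfin : @IsFiniteMeasure S m μ) (V : Set S) :
    ∃ ν : @Measure S (m ⊔ MeasurableSpace.generateFrom {V}),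
      (∀ E : Set S, MeasurableSet[m ⊔ MeasurableSpace.generateFrom {V}] E →
        ν E = outerM m μ (E ∩ V) + innerM m μ (E ∩ Vᶜ)) ∧
      (∀ B : Set S, MeasurableSet[m] B → ν B = μ B) ∧
      ν V = outerM m μ V := by
  haveI := _hfin
  set W := toMeasurable μ V with hW
  have hWmeas : MeasurableSet[m] W := measurableSet_toMeasurable μ V
  have hVW : V ⊆ W := subset_toMeasurable μ V
  letI mV := m ⊔ MeasurableSpace.generateFrom {V}
  -- countable additivity
  have mU : ∀ ⦃f : ℕ → Set S⦄, (∀ i, MeasurableSet[mV] (f i)) →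
      Pairwise (Function.onFun Disjoint f) →
      (outerM m μ ((⋃ i, f i) ∩ V) + innerM m μ ((⋃ i, f i) ∩ Vᶜ)) =
        ∑' i, (outerM m μ (f i ∩ V) + innerM m μ (f i ∩ Vᶜ)) := by
    intro f hf hd
    choose A B hA hB h1 h2 using fun i => rep m V (f i) (hf i)
    have hUV : (⋃ i, f i) ∩ V = (⋃ i, A i) ∩ V := by
      rw [iUnion_inter, iUnion_inter]; exact iUnion_congr h1
    have hUVc : (⋃ i, f i) ∩ Vᶜ = (⋃ i, B i) ∩ Vᶜ := by
      rw [iUnion_inter, iUnion_inter]; exact iUnion_congr h2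
    have houter : outerM m μ ((⋃ i, f i) ∩ V) = ∑' i, outerM m μ (f i ∩ V) := by
      rw [hUV, outer_part m μ V (MeasurableSet.iUnion hA), iUnion_inter]
      rw [measure_iUnion₀ ?_ (fun i => ((hA i).inter hWmeas).nullMeasurableSet)]
      · exact tsum_congr fun i => by
          rw [h1 i, outer_part m μ V (hA i)]
      · intro i j hij
        show μ ((A i ∩ W) ∩ (A j ∩ W)) = 0
        have : (A i ∩ W) ∩ (A j ∩ W) ⊆ W ∩ (A i ∩ A j) := by
          intro x hx; exact ⟨hx.1.2, hx.1.1, hx.2.1⟩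
        refine measure_mono_null this ?_
        rw [hW, Measure.measure_toMeasurable_inter ((hA i).inter (hA j)) (measure_ne_top μ V)]
        have : V ∩ (A i ∩ A j) = ∅ := by
          apply eq_empty_of_subset_empty
          intro x hx
          have hxi : x ∈ f i ∩ V := (Set.ext_iff.mp (h1 i) x).mpr ⟨hx.2.1, hx.1⟩
          have hxj : x ∈ f j ∩ V := (Set.ext_iff.mp (h1 j) x).mpr ⟨hx.2.2, hx.1⟩
          exact (hd hij).le_bot ⟨hxi.1, hxj.1⟩
        simp [this]
    have hinner : innerM m μ ((⋃ i, f i) ∩ Vᶜ) = ∑' i, innerM m μ (f i ∩ Vᶜ) := by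
      rw [hUVc, inner_part m μ V (MeasurableSet.iUnion hB), iUnion_inter]
      rw [measure_iUnion ?_ (fun i => (hB i).inter hWmeas.compl)]
      · exact tsum_congr fun i => by rw [h2 i, inner_part m μ V (hB i)]
      · intro i j hij
        refine Set.disjoint_left.mpr fun x hxi hxj => ?_
        have hWc : x ∈ Vᶜ := (compl_subset_compl.mpr hVW) hxi.2
        have h1' : x ∈ f i := (((Set.ext_iff.mp (h2 i) x).mpr ⟨hxi.1, hWc⟩ : x ∈ f i ∩ Vᶜ)).1
        have h2' : x ∈ f j := (((Set.ext_iff.mp (h2 j) x).mpr ⟨hxj.1, hWc⟩ : x ∈ f j ∩ Vᶜ)).1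
        exact (hd hij).le_bot ⟨h1', h2'⟩
    rw [houter, hinner, ENNReal.tsum_add]
  refine ⟨@Measure.ofMeasurable S mV
      (fun E _ => outerM m μ (E ∩ V) + innerM m μ (E ∩ Vᶜ)) ?_ ?_, ?_, ?_, ?_⟩
  · simp [outerM_eq, innerM_empty]
  · intro f hf hd; exact mU hf hd
  · intro E hE
    exact @Measure.ofMeasurable_apply S mV _ _ _ E hE
  · intro B hB
    have hBV : MeasurableSet[mV] B := le_sup_left (α := MeasurableSpace S) _ hB
    rw [@Measure.ofMeasurable_apply S mV _ _ _ B hBV, outer_part m μ V hB,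
      inner_part m μ V hB, ← diff_eq, measure_inter_add_diff B hWmeas]
  · have hVmeas : MeasurableSet[mV] V :=
      le_sup_right (α := MeasurableSpace S) _
        (MeasurableSpace.measurableSet_generateFrom rfl)
    rw [@Measure.ofMeasurable_apply S mV _ _ _ V hVmeas]
    simp [innerM_empty]
end

section
/- The category of stationary Markov processes and zig-zag morphisms does not have semi-pullbacks: there exist stationary Markov processes S₁, S₂, T and zig-zag morphisms fᵢ : Sᵢ → T (i = 1, 2) such that no stationary Markov process S with zig-zag morphisms πᵢ : S → Sᵢ satisfies f₁ ∘ π₁ = f₂ ∘ π₂. -/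
open MeasureTheory Set
open scoped ENNReal

noncomputable section

/-- A stationary Markov process: a measurable space with a single sub-Markov
kernel, presented as a measure-valued map. -/
structure SMP where
  S : Type
  m : MeasurableSpace S
  τ : S → @Measure S m
  sub : ∀ s, τ s Set.univ ≤ 1
  meas : ∀ A : Set S, MeasurableSet[m] A → @Measurable S ℝ≥0∞ m _ fun s => τ s A

/-- A zig-zag morphism of stationary Markov processes: a surjective measurable
map commuting with the kernels. -/
def ZigZag (X Y : SMP) (f : X.S → Y.S) : Prop :=
  Function.Surjective f ∧ @Measurable X.S Y.S X.m Y.m f ∧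
  ∀ s : X.S, ∀ Q : Set Y.S, MeasurableSet[Y.m] Q → X.τ s (f ⁻¹' Q) = Y.τ (f s) Q

namespace NSP


abbrev μI : Measure unitInterval := volume

variable (V : Set unitInterval)

def W1 : Set unitInterval := toMeasurable μI V
def W2 : Set unitInterval := (toMeasurable μI Vᶜ)ᶜ

lemma subset_W1 : V ⊆ W1 V := subset_toMeasurable _ _
lemma W2_subset : W2 V ⊆ V := compl_subset_comm.2 (subset_toMeasurable _ _)
lemma measurableSet_W1 : MeasurableSet (W1 V) := measurableSet_toMeasurable _ _
lemma measurableSet_W2 : MeasurableSet (W2 V) := (measurableSet_toMeasurable _ _).compl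

def 𝒜 : MeasurableSpace unitInterval :=
  (inferInstance : MeasurableSpace unitInterval) ⊔ MeasurableSpace.generateFrom {V}

lemma borel_le_𝒜 : (inferInstance : MeasurableSpace unitInterval) ≤ 𝒜 V := le_sup_left

lemma measurableSet_V : MeasurableSet[𝒜 V] V := by
  have h : MeasurableSpace.generateFrom {V} ≤ 𝒜 V := le_sup_right
  exact h _ (MeasurableSpace.measurableSet_generateFrom rfl)

def m1 : OuterMeasure unitInterval :=
  OuterMeasure.restrict V μI.toOuterMeasure + OuterMeasure.restrict (W1 V)ᶜ μI.toOuterMeasure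

def m2 : OuterMeasure unitInterval :=
  OuterMeasure.restrict (W2 V) μI.toOuterMeasure + OuterMeasure.restrict Vᶜ μI.toOuterMeasure

lemma m1_apply (A : Set unitInterval) : m1 V A = μI (A ∩ V) + μI (A ∩ (W1 V)ᶜ) := by
  simp [m1, OuterMeasure.restrict_apply]

lemma m2_apply (A : Set unitInterval) : m2 V A = μI (A ∩ W2 V) + μI (A ∩ Vᶜ) := by
  simp [m2, OuterMeasure.restrict_apply]

lemma inter_W1_compl : V ∩ (W1 V)ᶜ = ∅ := by
  have := Set.diff_eq_empty.mpr (subset_W1 V); rwa [Set.diff_eq] at this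

lemma m1_V : m1 V V = μI (W1 V) := by
  rw [m1_apply, inter_self, inter_W1_compl]
  simp [W1, measure_toMeasurable]

lemma m2_V : m2 V V = μI (W2 V) := by
  rw [m2_apply, inter_eq_self_of_subset_right (W2_subset V)]
  simp

/-- On genuinely measurable sets both extensions agree with Lebesgue measure. -/
lemma m1_eq_of_measurable {B : Set unitInterval} (hB : MeasurableSet B) : m1 V B = μI B := by
  rw [m1_apply]
  have h1 : μI (B ∩ V) = μI (B ∩ W1 V) := by
    rw [inter_comm B V, inter_comm B (W1 V)]
    exact (Measure.measure_toMeasurable_inter hB (measure_ne_top _ _)).symm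
  rw [h1, ← Set.diff_eq, ← measure_inter_add_diff B (measurableSet_W1 V)]

lemma m2_eq_of_measurable {B : Set unitInterval} (hB : MeasurableSet B) : m2 V B = μI B := by
  rw [m2_apply]
  have h1 : μI (B ∩ Vᶜ) = μI (B ∩ (W2 V)ᶜ) := by
    rw [inter_comm B _, inter_comm B _]
    simpa [W2] using (Measure.measure_toMeasurable_inter hB (measure_ne_top μI Vᶜ)).symm
  rw [h1, ← Set.diff_eq, ← measure_inter_add_diff B (measurableSet_W2 V)]

lemma car1 : 𝒜 V ≤ (m1 V).caratheodory := by
  refine sup_le ?_ ?_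
  · intro s hs
    rw [OuterMeasure.isCaratheodory_iff]
    intro t
    rw [m1_apply, m1_apply, m1_apply]
    have e1 : t ∩ s ∩ V = (t ∩ V) ∩ s := by ext x; simp; tauto
    have e2 : t \ s ∩ V = (t ∩ V) \ s := by ext x; simp [Set.diff_eq]; tauto
    have e3 : t ∩ s ∩ (W1 V)ᶜ = (t ∩ (W1 V)ᶜ) ∩ s := by ext x; simp; tauto
    have e4 : t \ s ∩ (W1 V)ᶜ = (t ∩ (W1 V)ᶜ) \ s := by ext x; simp [Set.diff_eq]; tauto
    rw [e1, e2, e3, e4, ← measure_inter_add_diff (t ∩ V) hs,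
      ← measure_inter_add_diff (t ∩ (W1 V)ᶜ) hs]
    ring
  · refine MeasurableSpace.generateFrom_le ?_
    rintro s rfl
    rw [OuterMeasure.isCaratheodory_iff]
    intro t
    rw [m1_apply, m1_apply, m1_apply]
    have e1 : t ∩ s ∩ s = t ∩ s := by rw [inter_assoc, inter_self]
    have hsw : s ⊆ W1 s := subset_W1 s
    have e2 : t ∩ s ∩ (W1 s)ᶜ = ∅ := by
      ext x
      simp only [mem_inter_iff, mem_empty_iff_false, iff_false, mem_compl_iff, not_and]
      exact fun h hx => hx (hsw h.2)
    have e3 : t \ s ∩ s = ∅ := by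
      ext x
      simp only [Set.diff_eq, mem_inter_iff, mem_compl_iff, mem_empty_iff_false, iff_false,
        not_and]
      tauto
    have e4 : t \ s ∩ (W1 s)ᶜ = t ∩ (W1 s)ᶜ := by
      ext x
      simp only [Set.diff_eq, mem_inter_iff, mem_compl_iff]
      exact ⟨fun h => ⟨h.1.1, h.2⟩, fun h => ⟨⟨h.1, fun hx => h.2 (hsw hx)⟩, h.2⟩⟩
    rw [e1, e2, e3, e4]
    simp [add_comm]

lemma car2 : 𝒜 V ≤ (m2 V).caratheodory := by
  refine sup_le ?_ ?_
  · intro s hs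
    rw [OuterMeasure.isCaratheodory_iff]
    intro t
    rw [m2_apply, m2_apply, m2_apply]
    have e1 : t ∩ s ∩ W2 V = (t ∩ W2 V) ∩ s := by ext x; simp; tauto
    have e2 : t \ s ∩ W2 V = (t ∩ W2 V) \ s := by ext x; simp [Set.diff_eq]; tauto
    have e3 : t ∩ s ∩ Vᶜ = (t ∩ Vᶜ) ∩ s := by ext x; simp; tauto
    have e4 : t \ s ∩ Vᶜ = (t ∩ Vᶜ) \ s := by ext x; simp [Set.diff_eq]; tauto
    rw [e1, e2, e3, e4, ← measure_inter_add_diff (t ∩ W2 V) hs,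
      ← measure_inter_add_diff (t ∩ Vᶜ) hs]
    ring
  · refine MeasurableSpace.generateFrom_le ?_
    rintro s rfl
    rw [OuterMeasure.isCaratheodory_iff]
    intro t
    rw [m2_apply, m2_apply, m2_apply]
    have hws : W2 s ⊆ s := W2_subset s
    have e1 : t ∩ s ∩ W2 s = t ∩ W2 s := by
      ext x
      simp only [mem_inter_iff]
      exact ⟨fun h => ⟨h.1.1, h.2⟩, fun h => ⟨⟨h.1, hws h.2⟩, h.2⟩⟩
    have e2 : t ∩ s ∩ sᶜ = ∅ := by
      ext x
      simp only [mem_inter_iff, mem_compl_iff, mem_empty_iff_false, iff_false, not_and]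
      tauto
    have e3 : t \ s ∩ W2 s = ∅ := by
      ext x
      simp only [Set.diff_eq, mem_inter_iff, mem_compl_iff, mem_empty_iff_false, iff_false,
        not_and]
      exact fun h hx => h.2 (hws hx)
    have e4 : t \ s ∩ sᶜ = t ∩ sᶜ := by
      ext x
      simp only [Set.diff_eq, mem_inter_iff, mem_compl_iff]
      tauto
    rw [e1, e2, e3, e4]
    simp

/-- The two extension measures on the enlarged σ-algebra. -/
def ν1 : @Measure unitInterval (𝒜 V) := @OuterMeasure.toMeasure _ (𝒜 V) (m1 V) (car1 V)
def ν2 : @Measure unitInterval (𝒜 V) := @OuterMeasure.toMeasure _ (𝒜 V) (m2 V) (car2 V)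

lemma ν1_apply {A : Set unitInterval} (hA : MeasurableSet[𝒜 V] A) : ν1 V A = m1 V A :=
  @toMeasure_apply _ (𝒜 V) (m1 V) (car1 V) _ hA

lemma ν2_apply {A : Set unitInterval} (hA : MeasurableSet[𝒜 V] A) : ν2 V A = m2 V A :=
  @toMeasure_apply _ (𝒜 V) (m2 V) (car2 V) _ hA

lemma ν1_univ : ν1 V Set.univ = 1 := by
  rw [ν1_apply V MeasurableSet.univ, m1_eq_of_measurable V MeasurableSet.univ]
  simp

lemma ν2_univ : ν2 V Set.univ = 1 := by
  rw [ν2_apply V MeasurableSet.univ, m2_eq_of_measurable V MeasurableSet.univ]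
  simp


/-- The process `S₁`: the unit interval with the enlarged σ-algebra and the
constant kernel `ν1` (giving `V` its outer measure). -/
def SMP1 : SMP where
  S := unitInterval
  m := 𝒜 V
  τ := fun _ => ν1 V
  sub := fun _ => le_of_eq (ν1_univ V)
  meas := fun A _ => @measurable_const ℝ≥0∞ unitInterval _ (𝒜 V) _

/-- The process `S₂`: same σ-algebra, with the constant kernel `ν2` (giving `V`
its inner measure). -/
def SMP2 : SMP where
  S := unitInterval
  m := 𝒜 V
  τ := fun _ => ν2 V
  sub := fun _ => le_of_eq (ν2_univ V)
  meas := fun A _ => @measurable_const ℝ≥0∞ unitInterval _ (𝒜 V) _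

/-- The process `T`: the unit interval with its Borel σ-algebra and the
constant Lebesgue kernel. -/
def SMPT : SMP where
  S := unitInterval
  m := inferInstance
  τ := fun _ => volume
  sub := fun _ => le_of_eq measure_univ
  meas := fun A _ => measurable_const

lemma zigzag1 : ZigZag (SMP1 V) SMPT id := by
  refine ⟨Function.surjective_id, fun s hs => borel_le_𝒜 V s hs, fun s Q hQ => ?_⟩
  show ν1 V (id ⁻¹' Q) = μI Q
  change ν1 V Q = μI Q
  rw [ν1_apply V (borel_le_𝒜 V Q hQ), m1_eq_of_measurable V hQ]

lemma zigzag2 : ZigZag (SMP2 V) SMPT id := by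
  refine ⟨Function.surjective_id, fun s hs => borel_le_𝒜 V s hs, fun s Q hQ => ?_⟩
  show ν2 V (id ⁻¹' Q) = μI Q
  change ν2 V Q = μI Q
  rw [ν2_apply V (borel_le_𝒜 V Q hQ), m2_eq_of_measurable V hQ]

end NSP

/-- (assuming a non-Lebesgue-measurable subset of [0,1]) the
category of stationary Markov processes and zig-zag morphisms does not have
semi-pullbacks. -/
theorem no_semi_pullbacks (V : Set unitInterval)
    (hV : ¬ NullMeasurableSet V (volume : Measure unitInterval)) :
    ∃ (S₁ S₂ T : SMP) (f₁ : S₁.S → T.S) (f₂ : S₂.S → T.S),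
      ZigZag S₁ T f₁ ∧ ZigZag S₂ T f₂ ∧
      ∀ (X : SMP) (π₁ : X.S → S₁.S) (π₂ : X.S → S₂.S),
        ZigZag X S₁ π₁ → ZigZag X S₂ π₂ → f₁ ∘ π₁ ≠ f₂ ∘ π₂ := by
  classical
  refine ⟨NSP.SMP1 V, NSP.SMP2 V, NSP.SMPT, id, id, NSP.zigzag1 V, NSP.zigzag2 V, ?_⟩
  intro X π₁ π₂ h₁ h₂ heq
  have hππ : π₁ = π₂ := heq
  obtain ⟨s, -⟩ := h₁.1 (0 : unitInterval)
  have hA := h₁.2.2 s V (NSP.measurableSet_V V)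
  have hB := h₂.2.2 s V (NSP.measurableSet_V V)
  rw [hππ] at hA
  have heqν : NSP.ν1 V V = NSP.ν2 V V := hA.symm.trans hB
  rw [NSP.ν1_apply V (NSP.measurableSet_V V), NSP.ν2_apply V (NSP.measurableSet_V V),
    NSP.m1_V, NSP.m2_V] at heqν
  -- the hull and the kernel of `V` have the same measure, so `V` is
  -- null-measurable, a contradiction
  apply hV
  have hsub : NSP.W2 V ⊆ NSP.W1 V := (NSP.W2_subset V).trans (NSP.subset_W1 V)
  have hd : NSP.μI (NSP.W1 V \ NSP.W2 V) = 0 := by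
    rw [measure_diff hsub (NSP.measurableSet_W2 V).nullMeasurableSet (measure_ne_top _ _), heqν,
      tsub_self]
  have hae : NSP.W2 V =ᵐ[NSP.μI] V := by
    rw [MeasureTheory.ae_eq_set]
    constructor
    · rw [Set.diff_eq_empty.2 (NSP.W2_subset V)]; exact measure_empty
    · exact measure_mono_null (Set.diff_subset_diff_left (NSP.subset_W1 V)) hd
  exact ((NSP.measurableSet_W2 V).nullMeasurableSet).congr hae

end
end

section
/- Let V ⊆ (0,1) be non-Lebesgue-measurable, m₀, m₁ extensions of Lebesgue measure to 𝒮_V with m₀(V) ≠ m₁(V), s, t, x three distinct points not in (0,1), and let (B_a)_{a∈ℕ} enumerate the rational open subintervals of (0,1). Consider the labelled Markov process S₃ on the space ((0,1) ⊕ {s,t,x}, 𝒮_V ⊕ Pow({s,t,x})) with labels L = ℕ ∪ {∞}, kernels τ_a(r, A) = χ_{B_a}(r)·δ_x(A) for a ∈ ℕ and τ_∞(r, A) = χ_{{s}}(r)·m₀(A ∩ (0,1)) + χ_{{t}}(r)·m₁(A ∩ (0,1)). Then each τ_a (a ∈ L) is a Markov kernel, i.e., S₃ is a labelled Markov process. 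-/
open MeasureTheory Set
open scoped ENNReal Classical

noncomputable section

/-- The open unit interval (0,1) as a measurable space (Borel subsets). -/
abbrev I01 : Type := ↥(Set.Ioo (0:ℝ) 1)

/-- The state space of the LMP S₃: (0,1) ⊕ {s,t,x}, where s,t,x are coded as
`Sum.inr 0`, `Sum.inr 1`, `Sum.inr 2`. -/
abbrev St3 : Type := I01 ⊕ Fin 3

/-- Lebesgue measure on (0,1). -/
def lebI : Measure I01 := (volume : Measure ℝ).comap Subtype.val

/-- The Borel σ-algebra on (0,1). -/
def mI : MeasurableSpace I01 := inferInstance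

/-- 𝒮_V = σ(Borel((0,1)) ∪ {V}). -/
def mV (V : Set I01) : MeasurableSpace I01 := mI ⊔ MeasurableSpace.generateFrom {V}

/-- 𝒮₃ = 𝒮_V ⊕ Pow({s,t,x}). -/
def m3 (V : Set I01) : MeasurableSpace St3 :=
  @Sum.instMeasurableSpace I01 (Fin 3) (mV V) ⊤

/-- The labels of S₃: ℕ ∪ {∞}, with ∞ coded as `Sum.inr ()`. -/
abbrev L3 : Type := ℕ ⊕ Unit

/-- The transition kernels of the LMP S₃:
τ_a(r,·) = χ_{B_a}(r)·δ_x for a ∈ ℕ, and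
τ_∞(r,·) = χ_{{s}}(r)·m₀(· ∩ (0,1)) + χ_{{t}}(r)·m₁(· ∩ (0,1)). -/
def kern3 (V : Set I01) (m₀ m₁ : @Measure I01 (mV V)) (B : ℕ → Set I01) :
    L3 → St3 → @Measure St3 (m3 V)
  | Sum.inl a => fun r =>
      match r with
      | Sum.inl y => if y ∈ B a then @Measure.dirac St3 (m3 V) (Sum.inr 2) else 0
      | Sum.inr _ => 0
  | Sum.inr _ => fun r =>
      match r with
      | Sum.inr i =>
          if i = 0 then @Measure.map I01 St3 (mV V) (m3 V) Sum.inl m₀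
          else if i = 1 then @Measure.map I01 St3 (mV V) (m3 V) Sum.inl m₁
          else 0
      | Sum.inl _ => 0

/-- `B` enumerates the open subintervals of (0,1) with rational endpoints. -/
def EnumeratesRationalIntervals (B : ℕ → Set I01) : Prop :=
  (∀ a : ℕ, ∃ p q : ℚ, B a = {y : I01 | (p:ℝ) < (y:ℝ) ∧ (y:ℝ) < (q:ℝ)}) ∧
  (∀ p q : ℚ, ∃ a : ℕ, B a = {y : I01 | (p:ℝ) < (y:ℝ) ∧ (y:ℝ) < (q:ℝ)})

/-- each τ_a (a ∈ ℕ ∪ {∞}) of the process S₃ is a (sub-)Markov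
kernel; i.e., S₃ is a labelled Markov process. -/
theorem S3_is_LMP (V : Set I01)
    (hV : ¬ @NullMeasurableSet I01 mI V lebI)
    (m₀ m₁ : @Measure I01 (mV V))
    (hm₀ : ∀ A : Set I01, MeasurableSet[mI] A → m₀ A = lebI A)
    (hm₁ : ∀ A : Set I01, MeasurableSet[mI] A → m₁ A = lebI A)
    (hne : m₀ V ≠ m₁ V)
    (hm₀sub : m₀ Set.univ ≤ 1) (hm₁sub : m₁ Set.univ ≤ 1)
    (B : ℕ → Set I01) (hB : EnumeratesRationalIntervals B) :
    ∀ l : L3,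
      (∀ r : St3, kern3 V m₀ m₁ B l r Set.univ ≤ 1) ∧
      (∀ A : Set St3, MeasurableSet[m3 V] A →
        @Measurable St3 ℝ≥0∞ (m3 V) _ fun r => kern3 V m₀ m₁ B l r A) := by
  intro l
  cases l with
  | inl a =>
    have hBa : MeasurableSet[mV V] (B a) := by
      obtain ⟨p, q, hpq⟩ := hB.1 a
      have hb : MeasurableSet[mI] (B a) := by
        have : B a = (Subtype.val : I01 → ℝ) ⁻¹' (Set.Ioo (p:ℝ) (q:ℝ)) := by
          rw [hpq]; ext y; simp [Set.mem_Ioo]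
        rw [this]
        exact measurableSet_Ioo.preimage measurable_subtype_coe
      exact (le_sup_left : mI ≤ mV V) _ hb
    constructor
    · intro r
      cases r with
      | inl y =>
        simp only [kern3]
        split_ifs
        · simp
        · simp
      | inr i => simp [kern3]
    · intro A hA
      apply @measurable_fun_sum I01 (Fin 3) ℝ≥0∞ (mV V) ⊤ _
      · have : ((fun r => kern3 V m₀ m₁ B (Sum.inl a) r A) ∘ Sum.inl) =
            fun y : I01 => if y ∈ B a then
              (@Measure.dirac St3 (m3 V) (Sum.inr 2)) A else 0 := by
          funext y
          simp only [Function.comp, kern3]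
          split_ifs <;> simp
        rw [this]
        exact Measurable.ite hBa measurable_const measurable_const
      · exact @measurable_from_top (Fin 3) ℝ≥0∞ _ _
  | inr u =>
    constructor
    · intro r
      cases r with
      | inl y => simp [kern3]
      | inr i =>
        simp only [kern3]
        have hmap : ∀ (m : @Measure I01 (mV V)),
            (@Measure.map I01 St3 (mV V) (m3 V) Sum.inl m) Set.univ = m Set.univ := by
          intro m
          erw [Measure.map_apply (@measurable_inl I01 (Fin 3) (mV V) ⊤) MeasurableSet.univ]
          simp
        split_ifs
        · rw [hmap]; exact hm₀sub
        · rw [hmap]; exact hm₁sub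
        · simp
    · intro A hA
      apply @measurable_fun_sum I01 (Fin 3) ℝ≥0∞ (mV V) ⊤ _
      · have : ((fun r => kern3 V m₀ m₁ B (Sum.inr u) r A) ∘ Sum.inl) =
            fun _ : I01 => (0 : ℝ≥0∞) := by
          funext y; simp [Function.comp, kern3]
        rw [this]; exact measurable_const
      · exact @measurable_from_top (Fin 3) ℝ≥0∞ _ _

end
end

section
/- In the labelled Markov process S₃ (as described in the context), the states s and t are event-bisimilar: the σ-algebra 𝒰 = σ({B_a : a ∈ ℕ} ∪ {{s,t}, {x}}) is a stable sub-σ-algebra of 𝒮₃ (i.e., an event bisimulation), and no set in 𝒰 separates s from t. -/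
open MeasureTheory Set
open scoped ENNReal Classical

noncomputable section

/-- The generating family of the σ-algebra 𝒰 = σ({B_a : a ∈ ℕ} ∪ {{s,t},{x}})
on the state space of S₃. -/
def genU (B : ℕ → Set I01) : Set (Set St3) :=
  {A | ∃ a : ℕ, A = Sum.inl '' B a} ∪
    {({Sum.inr 0, Sum.inr 1} : Set St3), ({Sum.inr 2} : Set St3)}

/-- the σ-algebra 𝒰 = σ({B_a} ∪ {{s,t},{x}}) is a stable
sub-σ-algebra of 𝒮₃ (an event bisimulation), and no set in 𝒰 separates s
from t; hence s and t are event-bisimilar in S₃. -/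
theorem s_t_event_bisimilar (V : Set I01)
    (hV : ¬ @NullMeasurableSet I01 mI V lebI)
    (m₀ m₁ : @Measure I01 (mV V))
    (hm₀ : ∀ A : Set I01, MeasurableSet[mI] A → m₀ A = lebI A)
    (hm₁ : ∀ A : Set I01, MeasurableSet[mI] A → m₁ A = lebI A)
    (hne : m₀ V ≠ m₁ V)
    (B : ℕ → Set I01) (hB : EnumeratesRationalIntervals B) :
    MeasurableSpace.generateFrom (genU B) ≤ m3 V ∧
    (∀ A : Set St3, MeasurableSet[MeasurableSpace.generateFrom (genU B)] A →
      ∀ l : L3, ∀ q : ℝ≥0∞,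
        MeasurableSet[MeasurableSpace.generateFrom (genU B)]
          {z : St3 | q < kern3 V m₀ m₁ B l z A}) ∧
    (∀ Q : Set St3, MeasurableSet[MeasurableSpace.generateFrom (genU B)] Q →
      ((Sum.inr 0 : St3) ∈ Q ↔ (Sum.inr 1 : St3) ∈ Q)) := by
  -- each B a is Borel
  have hBa : ∀ a : ℕ, MeasurableSet[mI] (B a) := by
    intro a
    obtain ⟨p, q, h⟩ := hB.1 a
    have : B a = (Subtype.val ⁻¹' (Set.Ioo (p:ℝ) (q:ℝ)) : Set I01) := by
      rw [h]; rfl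
    rw [this]
    exact measurableSet_Ioo.preimage measurable_subtype_coe
  have hBaV : ∀ a : ℕ, MeasurableSet[mV V] (B a) := fun a =>
    (le_sup_left : mI ≤ mV V) _ (hBa a)
  -- Part 1
  have hle : MeasurableSpace.generateFrom (genU B) ≤ m3 V := by
    apply MeasurableSpace.generateFrom_le
    rintro A (⟨a, rfl⟩ | hA | hA)
    · exact @MeasurableSet.inl_image I01 (Fin 3) (mV V) ⊤ _ (hBaV a)
    · rw [hA, show ({Sum.inr 0, Sum.inr 1} : Set St3) = Sum.inr '' {0, 1} by
        simp [Set.image_insert_eq]]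
      exact @MeasurableSet.inr_image I01 (Fin 3) (mV V) ⊤ _ trivial
    · rw [hA, show ({Sum.inr 2} : Set St3) = Sum.inr '' {2} by
        simp]
      exact @MeasurableSet.inr_image I01 (Fin 3) (mV V) ⊤ _ trivial
  -- preimages under inl are Borel
  have hpre : ∀ A : Set St3, MeasurableSet[MeasurableSpace.generateFrom (genU B)] A →
      MeasurableSet[mI] (Sum.inl ⁻¹' A) := by
    have hmap : MeasurableSpace.generateFrom (genU B) ≤ mI.map Sum.inl := by
      apply MeasurableSpace.generateFrom_le
      rintro A (⟨a, rfl⟩ | hA | hA)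
      · show MeasurableSet[mI] (Sum.inl ⁻¹' (Sum.inl '' B a))
        rw [Sum.inl_injective.preimage_image]
        exact hBa a
      · show MeasurableSet[mI] (Sum.inl ⁻¹' A)
        rw [hA]
        convert (MeasurableSet.empty : MeasurableSet[mI] ∅)
        ext y; simp
      · show MeasurableSet[mI] (Sum.inl ⁻¹' A)
        rw [hA]
        convert (MeasurableSet.empty : MeasurableSet[mI] ∅)
        ext y; simp
    intro A hA
    exact hmap _ hA
  -- Part 3
  have hsep : ∀ Q : Set St3, MeasurableSet[MeasurableSpace.generateFrom (genU B)] Q →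
      ((Sum.inr 0 : St3) ∈ Q ↔ (Sum.inr 1 : St3) ∈ Q) := by
    set f : St3 → St3 := fun z => match z with
      | Sum.inl y => Sum.inl y
      | Sum.inr i => if i = 1 then Sum.inr 0 else Sum.inr i with hf
    have hcom : MeasurableSpace.generateFrom (genU B) ≤ MeasurableSpace.comap f ⊤ := by
      apply MeasurableSpace.generateFrom_le
      rintro A (⟨a, rfl⟩ | hA | hA)
      · refine ⟨Sum.inl '' B a, trivial, ?_⟩
        ext z
        cases z with
        | inl y => simp [hf]
        | inr i =>
          simp only [hf, Set.mem_preimage]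
          constructor
          · intro h
            by_cases h1 : i = 1 <;> simp [h1] at h
          · intro h; simp at h
      · refine ⟨{Sum.inr 0}, trivial, ?_⟩
        rw [hA]
        ext z
        cases z with
        | inl y => simp [hf]
        | inr i => fin_cases i <;> simp [hf]
      · refine ⟨{Sum.inr 2}, trivial, ?_⟩
        rw [hA]
        ext z
        cases z with
        | inl y => simp [hf]
        | inr i => fin_cases i <;> simp [hf]
    intro Q hQ
    obtain ⟨t, -, rfl⟩ := hcom _ hQ
    have h0 : f (Sum.inr 0) = Sum.inr 0 := by simp [hf]
    have h1 : f (Sum.inr 1) = Sum.inr 0 := by simp [hf]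
    simp only [Set.mem_preimage, h0, h1]
  refine ⟨hle, ?_, hsep⟩
  -- Part 2: stability
  intro A hA l q
  have hA3 : MeasurableSet[m3 V] A := hle _ hA
  have hpreA : MeasurableSet[mI] (Sum.inl ⁻¹' A) := hpre A hA
  cases l with
  | inl a =>
    have hd : @Measure.dirac St3 (m3 V) (Sum.inr 2) A =
        if (Sum.inr 2 : St3) ∈ A then 1 else 0 := by
      rw [@Measure.dirac_apply' St3 (m3 V) _ _ hA3]
      simp [Set.indicator_apply]
    have hset : {z : St3 | q < kern3 V m₀ m₁ B (Sum.inl a) z A} =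
        if ((Sum.inr 2 : St3) ∈ A ∧ q < 1) then Sum.inl '' B a else ∅ := by
      by_cases hx : (Sum.inr 2 : St3) ∈ A
      · by_cases hq : q < 1
        · rw [if_pos ⟨hx, hq⟩]
          ext z
          cases z with
          | inl y =>
            by_cases hy : y ∈ B a <;>
              simp [kern3, hy, hd, hx, hq, Sum.inl.injEq]
          | inr i => simp [kern3]
        · rw [if_neg (by tauto)]
          ext z
          cases z with
          | inl y =>
            by_cases hy : y ∈ B a <;> simp [kern3, hy, hd, hx, hq]
          | inr i => simp [kern3]
      · rw [if_neg (by tauto)]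
        ext z
        cases z with
        | inl y =>
          by_cases hy : y ∈ B a <;> simp [kern3, hy, hd, hx]
        | inr i => simp [kern3]
    rw [hset]
    split
    · exact MeasurableSpace.measurableSet_generateFrom (Or.inl ⟨a, rfl⟩)
    · exact @MeasurableSet.empty _ (MeasurableSpace.generateFrom (genU B))
  | inr u =>
    have hinl : @Measurable I01 St3 (mV V) (m3 V) Sum.inl :=
      @measurable_inl I01 (Fin 3) (mV V) ⊤
    have hpreAV : MeasurableSet[mV V] (Sum.inl ⁻¹' A) :=
      (le_sup_left : mI ≤ mV V) _ hpreA
    have h0 : @Measure.map I01 St3 (mV V) (m3 V) Sum.inl m₀ A = lebI (Sum.inl ⁻¹' A) := by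
      rw [Measure.map_apply hinl hA3, hm₀ _ hpreA]
    have h1 : @Measure.map I01 St3 (mV V) (m3 V) Sum.inl m₁ A = lebI (Sum.inl ⁻¹' A) := by
      rw [Measure.map_apply hinl hA3, hm₁ _ hpreA]
    have hset : {z : St3 | q < kern3 V m₀ m₁ B (Sum.inr u) z A} =
        if q < lebI (Sum.inl ⁻¹' A) then ({Sum.inr 0, Sum.inr 1} : Set St3) else ∅ := by
      by_cases hq : q < lebI (Sum.inl ⁻¹' A)
      · rw [if_pos hq]
        ext z
        cases z with
        | inl y => simp [kern3]
        | inr i => fin_cases i <;> simp [kern3, h0, h1, hq, Sum.inr.injEq]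
      · rw [if_neg hq]
        ext z
        cases z with
        | inl y => simp [kern3]
        | inr i => fin_cases i <;> simp [kern3, h0, h1, hq, Sum.inr.injEq]
    rw [hset]
    split
    · exact MeasurableSpace.measurableSet_generateFrom (Or.inr (Or.inl rfl))
    · exact @MeasurableSet.empty _ (MeasurableSpace.generateFrom (genU B))
end
end

section
/- In the labelled Markov process S₃ (as described in the context), the relation of state bisimilarity is the identity relation; in particular, the states s and t are not state-bisimilar, even though they are event-bisimilar. Hence event bisimilarity and state bisimilarity differ on S₃. -/
open MeasureTheory Set
open scoped ENNReal Classical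

noncomputable section

/-- A set Q is R-closed: u ∈ Q and u R v imply v ∈ Q. -/
def RClosed {α : Type*} (R : α → α → Prop) (Q : Set α) : Prop :=
  ∀ u ∈ Q, ∀ v, R u v → v ∈ Q

/-- R is a state bisimulation on S₃: symmetric, and related states assign the
same value to every measurable R-closed set, for every label. -/
def IsStateBisim3 (V : Set I01) (m₀ m₁ : @Measure I01 (mV V)) (B : ℕ → Set I01)
    (R : St3 → St3 → Prop) : Prop :=
  Symmetric R ∧
  ∀ u v, R u v → ∀ l : L3, ∀ Q : Set St3, MeasurableSet[m3 V] Q → RClosed R Q →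
    kern3 V m₀ m₁ B l u Q = kern3 V m₀ m₁ B l v Q

/-- 𝒰 is a stable σ-algebra (event bisimulation) on S₃. -/
def IsStable3 (V : Set I01) (m₀ m₁ : @Measure I01 (mV V)) (B : ℕ → Set I01)
    (𝒰 : MeasurableSpace St3) : Prop :=
  𝒰 ≤ m3 V ∧
  ∀ A : Set St3, MeasurableSet[𝒰] A → ∀ l : L3, ∀ q : ℝ≥0∞,
    MeasurableSet[𝒰] {z : St3 | q < kern3 V m₀ m₁ B l z A}

/-! ### Auxiliary lemmas -/

lemma lebI_univ : lebI Set.univ = 1 := by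
  rw [lebI, (MeasurableEmbedding.subtype_coe measurableSet_Ioo).comap_apply,
    Set.image_univ, Subtype.range_coe, Real.volume_Ioo]
  norm_num

lemma mI_le_mV (V : Set I01) : mI ≤ mV V := le_sup_left

lemma mem_mV_of_mI {V : Set I01} {s : Set I01} (h : MeasurableSet[mI] s) :
    MeasurableSet[mV V] s := mI_le_mV V s h

lemma measurableSet_V (V : Set I01) : MeasurableSet[mV V] V :=
  (le_sup_right : _ ≤ mV V) V (MeasurableSpace.measurableSet_generateFrom (Set.mem_singleton V))

lemma measurable_inl3 (V : Set I01) : @Measurable I01 St3 (mV V) (m3 V) Sum.inl :=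
  @measurable_inl I01 (Fin 3) (mV V) ⊤

lemma measurableSet_m3 {V : Set I01} {Q : Set St3}
    (h : MeasurableSet[mV V] (Sum.inl ⁻¹' Q)) : MeasurableSet[m3 V] Q :=
  (@measurableSet_sum_iff I01 (Fin 3) (mV V) ⊤ Q).2 ⟨h, trivial⟩

lemma measurableSet_B {B : ℕ → Set I01} (hB : EnumeratesRationalIntervals B) (a : ℕ) :
    MeasurableSet[mI] (B a) := by
  obtain ⟨p, q, hpq⟩ := hB.1 a
  rw [hpq]
  exact measurable_subtype_coe (measurableSet_Ioo (a := (p:ℝ)) (b := (q:ℝ)))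

lemma exists_B_mem {B : ℕ → Set I01} (hB : EnumeratesRationalIntervals B) (y : I01) :
    ∃ a, y ∈ B a := by
  obtain ⟨p, hp1, hp2⟩ := exists_rat_btwn y.2.1
  obtain ⟨q, hq1, hq2⟩ := exists_rat_btwn y.2.2
  obtain ⟨a, ha⟩ := hB.2 p q
  exact ⟨a, by rw [ha]; exact ⟨hp2, hq1⟩⟩

lemma exists_B_sep {B : ℕ → Set I01} (hB : EnumeratesRationalIntervals B) {y z : I01}
    (h : (y:ℝ) < (z:ℝ)) : ∃ a, z ∈ B a ∧ y ∉ B a := by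
  obtain ⟨p, hp1, hp2⟩ := exists_rat_btwn h
  obtain ⟨q, hq⟩ := exists_rat_gt (z:ℝ)
  obtain ⟨a, ha⟩ := hB.2 p q
  refine ⟨a, by rw [ha]; exact ⟨hp2, hq⟩, ?_⟩
  rw [ha]; rintro ⟨h1, _⟩; exact absurd hp1 (not_lt.2 h1.le)


lemma kern_inf_s (V : Set I01) (m₀ m₁ : @Measure I01 (mV V)) (B : ℕ → Set I01) (u : Unit) :
    kern3 V m₀ m₁ B (Sum.inr u) (Sum.inr 0) = @Measure.map I01 St3 (mV V) (m3 V) Sum.inl m₀ := by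
  simp [kern3]

lemma kern_inf_t (V : Set I01) (m₀ m₁ : @Measure I01 (mV V)) (B : ℕ → Set I01) (u : Unit) :
    kern3 V m₀ m₁ B (Sum.inr u) (Sum.inr 1) = @Measure.map I01 St3 (mV V) (m3 V) Sum.inl m₁ := by
  simp [kern3, (by decide : (1 : Fin 3) ≠ 0)]

lemma kern_inf_x (V : Set I01) (m₀ m₁ : @Measure I01 (mV V)) (B : ℕ → Set I01) (u : Unit) :
    kern3 V m₀ m₁ B (Sum.inr u) (Sum.inr 2) = 0 := by
  simp [kern3, (by decide : (2 : Fin 3) ≠ 0), (by decide : (2 : Fin 3) ≠ 1)]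

/-- The stable σ-algebra witnessing event bisimilarity of s and t. -/
def U3 : MeasurableSpace St3 where
  MeasurableSet' Q := MeasurableSet[mI] (Sum.inl ⁻¹' Q) ∧
    ((Sum.inr 0 : St3) ∈ Q ↔ (Sum.inr 1 : St3) ∈ Q)
  measurableSet_empty := ⟨by simp, Iff.rfl⟩
  measurableSet_compl := fun Q hQ =>
    ⟨by rw [Set.preimage_compl]; exact hQ.1.compl, not_iff_not.2 hQ.2⟩
  measurableSet_iUnion := fun f hf =>
    ⟨by rw [Set.preimage_iUnion]; exact MeasurableSet.iUnion fun i => (hf i).1,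
     by simp only [Set.mem_iUnion]; exact exists_congr fun i => (hf i).2⟩

/-- in S₃ every state bisimulation is contained in the identity
relation (so state bisimilarity is the identity); in particular s and t are not
state-bisimilar, although they are event-bisimilar. Hence event bisimilarity
and state bisimilarity differ on S₃. -/
theorem state_bisimilarity_is_identity (V : Set I01)
    (hV : ¬ @NullMeasurableSet I01 mI V lebI)
    (m₀ m₁ : @Measure I01 (mV V))
    (hm₀ : ∀ A : Set I01, MeasurableSet[mI] A → m₀ A = lebI A)
    (hm₁ : ∀ A : Set I01, MeasurableSet[mI] A → m₁ A = lebI A)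
    (hne : m₀ V ≠ m₁ V)
    (B : ℕ → Set I01) (hB : EnumeratesRationalIntervals B) :
    (∀ R : St3 → St3 → Prop, IsStateBisim3 V m₀ m₁ B R → ∀ u v, R u v → u = v) ∧
    (¬ ∃ R : St3 → St3 → Prop, IsStateBisim3 V m₀ m₁ B R ∧
        R (Sum.inr 0) (Sum.inr 1)) ∧
    (∃ 𝒰 : MeasurableSpace St3, IsStable3 V m₀ m₁ B 𝒰 ∧
      ∀ Q : Set St3, MeasurableSet[𝒰] Q →
        ((Sum.inr 0 : St3) ∈ Q ↔ (Sum.inr 1 : St3) ∈ Q)) := by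
  -- basic kernel computations at `univ`
  have hm₀u : m₀ Set.univ = 1 := by rw [hm₀ _ MeasurableSet.univ, lebI_univ]
  have hm₁u : m₁ Set.univ = 1 := by rw [hm₁ _ MeasurableSet.univ, lebI_univ]
  have k_inl_inl : ∀ (a : ℕ) (y : I01),
      kern3 V m₀ m₁ B (Sum.inl a) (Sum.inl y) Set.univ = if y ∈ B a then 1 else 0 := by
    intro a y
    simp only [kern3]
    split
    · exact @Measure.dirac_apply_of_mem St3 (m3 V) _ _ (Set.mem_univ _)
    · simp
  have k_inl_inr : ∀ (a : ℕ) (i : Fin 3),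
      kern3 V m₀ m₁ B (Sum.inl a) (Sum.inr i) Set.univ = 0 := by
    intro a i; simp [kern3]
  have k_inf_inl : ∀ (y : I01),
      kern3 V m₀ m₁ B (Sum.inr ()) (Sum.inl y) Set.univ = 0 := by
    intro y; simp [kern3]
  have k_inf_s : kern3 V m₀ m₁ B (Sum.inr ()) (Sum.inr 0) Set.univ = 1 := by
    rw [kern_inf_s, Measure.map_apply (measurable_inl3 V) MeasurableSet.univ,
      Set.preimage_univ, hm₀u]
  have k_inf_t : kern3 V m₀ m₁ B (Sum.inr ()) (Sum.inr 1) Set.univ = 1 := by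
    rw [kern_inf_t, Measure.map_apply (measurable_inl3 V) MeasurableSet.univ,
      Set.preimage_univ, hm₁u]
  have k_inf_x : kern3 V m₀ m₁ B (Sum.inr ()) (Sum.inr 2) Set.univ = 0 := by
    rw [kern_inf_x]; simp
  -- the general part-1 claim
  have main : ∀ R : St3 → St3 → Prop, IsStateBisim3 V m₀ m₁ B R → ∀ u v, R u v → u = v := by
    intro R hR
    obtain ⟨hsymm, hbis⟩ := hR
    have huniv : ∀ u v, R u v → ∀ l : L3,
        kern3 V m₀ m₁ B l u Set.univ = kern3 V m₀ m₁ B l v Set.univ :=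
      fun u v h l => hbis u v h l Set.univ MeasurableSet.univ (fun _ _ v _ => Set.mem_univ v)
    have cross : ∀ (y : I01) (i : Fin 3), ¬ R (Sum.inl y) (Sum.inr i) := by
      intro y i h
      obtain ⟨a, ha⟩ := exists_B_mem hB y
      have := huniv _ _ h (Sum.inl a)
      rw [k_inl_inl, k_inl_inr, if_pos ha] at this
      exact one_ne_zero this
    have inlinl : ∀ y z : I01, R (Sum.inl y) (Sum.inl z) → y = z := by
      intro y z h
      have hiff : ∀ a, y ∈ B a ↔ z ∈ B a := by
        intro a
        have := huniv _ _ h (Sum.inl a)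
        rw [k_inl_inl, k_inl_inl] at this
        by_cases h1 : y ∈ B a <;> by_cases h2 : z ∈ B a <;>
          simp [h1, h2] at this ⊢
      rcases lt_trichotomy (y:ℝ) (z:ℝ) with hlt | heq | hgt
      · obtain ⟨a, hz, hy⟩ := exists_B_sep hB hlt
        exact absurd ((hiff a).2 hz) hy
      · exact Subtype.ext heq
      · obtain ⟨a, hy, hz⟩ := exists_B_sep hB hgt
        exact absurd ((hiff a).1 hy) hz
    -- s and t are not related
    have hst : ¬ R (Sum.inr 0) (Sum.inr 1) := by
      intro h
      set Q₀ : Set St3 := Sum.inl '' V ∪ Set.range Sum.inr with hQ₀def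
      have hpre : Sum.inl ⁻¹' Q₀ = V := by
        ext y; simp [hQ₀def]
      have hQm : MeasurableSet[m3 V] Q₀ := measurableSet_m3 (hpre ▸ measurableSet_V V)
      have hQc : RClosed R Q₀ := by
        rintro u hu v huv
        cases v with
        | inl z =>
          cases u with
          | inl w =>
            have hw : w ∈ V := by
              rcases hu with h1 | h1
              · obtain ⟨w', hw', hww⟩ := h1
                exact (Sum.inl_injective hww) ▸ hw'
              · obtain ⟨j, hj⟩ := h1; exact absurd hj (by simp)
            have : w = z := inlinl _ _ huv
            exact Or.inl ⟨z, this ▸ hw, rfl⟩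
          | inr i => exact absurd (hsymm huv) (cross z i)
        | inr j => exact Or.inr (Set.mem_range_self _)
      have hcomp := hbis _ _ h (Sum.inr ()) Q₀ hQm hQc
      have e0 : kern3 V m₀ m₁ B (Sum.inr ()) (Sum.inr 0) Q₀ = m₀ V := by
        rw [kern_inf_s, Measure.map_apply (measurable_inl3 V) hQm, hpre]
      have e1 : kern3 V m₀ m₁ B (Sum.inr ()) (Sum.inr 1) Q₀ = m₁ V := by
        rw [kern_inf_t, Measure.map_apply (measurable_inl3 V) hQm, hpre]
      rw [e0, e1] at hcomp
      exact hne hcomp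
    have hsx : ¬ R (Sum.inr 0) (Sum.inr 2) := by
      intro h
      have := huniv _ _ h (Sum.inr ())
      rw [k_inf_s, k_inf_x] at this
      exact one_ne_zero this
    have htx : ¬ R (Sum.inr 1) (Sum.inr 2) := by
      intro h
      have := huniv _ _ h (Sum.inr ())
      rw [k_inf_t, k_inf_x] at this
      exact one_ne_zero this
    intro u v huv
    rcases u with y | i <;> rcases v with z | j
    · exact congrArg Sum.inl (inlinl y z huv)
    · exact absurd huv (cross y j)
    · exact absurd (hsymm huv) (cross z i)
    · fin_cases i <;> fin_cases j <;>
        first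
        | rfl
        | exact absurd huv hst
        | exact absurd (hsymm huv) hst
        | exact absurd huv hsx
        | exact absurd (hsymm huv) hsx
        | exact absurd huv htx
        | exact absurd (hsymm huv) htx
  refine ⟨main, ?_, ?_⟩
  · rintro ⟨R, hR, hst⟩
    have := main R hR _ _ hst
    simp at this
  · -- event bisimulation part
    have hle : U3 ≤ m3 V := by
      intro Q hQ
      exact measurableSet_m3 (mem_mV_of_mI hQ.1)
    refine ⟨U3, ⟨hle, ?_⟩, fun Q hQ => hQ.2⟩
    intro A hA l q
    have hAm : MeasurableSet[m3 V] A := hle A hA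
    cases l with
    | inl a =>
      constructor
      · have hpre : Sum.inl ⁻¹' {z : St3 | q < kern3 V m₀ m₁ B (Sum.inl a) z A}
            = B a ∩ {y : I01 | q < @Measure.dirac St3 (m3 V) (Sum.inr 2) A} := by
          ext y
          simp only [Set.mem_preimage, Set.mem_setOf_eq, kern3, Set.mem_inter_iff]
          by_cases hy : y ∈ B a
          · simp [hy]
          · simp [hy]
        rw [hpre]
        refine (measurableSet_B hB a).inter ?_
        by_cases hq : q < @Measure.dirac St3 (m3 V) (Sum.inr 2) A
        · simpa [hq] using (MeasurableSet.univ : MeasurableSet[mI] Set.univ)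
        · simpa [hq] using (MeasurableSet.empty : MeasurableSet[mI] (∅ : Set I01))
      · exact Iff.rfl
    | inr u =>
      constructor
      · have hpre : Sum.inl ⁻¹' {z : St3 | q < kern3 V m₀ m₁ B (Sum.inr u) z A}
            = (∅ : Set I01) := by
          ext y; simp [kern3]
        rw [hpre]; exact MeasurableSet.empty
      · have hAV : MeasurableSet[mI] (Sum.inl ⁻¹' A) := hA.1
        have heq : @Measure.map I01 St3 (mV V) (m3 V) Sum.inl m₀ A
            = @Measure.map I01 St3 (mV V) (m3 V) Sum.inl m₁ A := by
          rw [Measure.map_apply (measurable_inl3 V) hAm,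
            Measure.map_apply (measurable_inl3 V) hAm, hm₀ _ hAV, hm₁ _ hAV]
        simp only [Set.mem_setOf_eq, kern_inf_s, kern_inf_t, heq]

end
end

section
/- If f : S → S' is a zig-zag morphism between labelled Markov processes S and S', then the equivalence relation on the direct sum S ⊕ S' generated by the pairs (s, f(s)) for s ∈ S is a state bisimulation on S ⊕ S'. -/
open MeasureTheory Set
open scoped ENNReal

noncomputable section

/-- R is a state bisimulation for the kernel family κ on (α, m): R is symmetric
and related states assign equal values to every measurable R-closed set, for
every label. -/
def IsStateBisim {L α : Type*} (m : MeasurableSpace α) (κ : L → α → @Measure α m)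
    (R : α → α → Prop) : Prop :=
  Symmetric R ∧
  ∀ u v, R u v → ∀ a : L, ∀ Q : Set α, MeasurableSet[m] Q → RClosed R Q →
    κ a u Q = κ a v Q

/-- The kernel family of the direct sum S ⊕ S', acting componentwise. -/
def sumKern {L S S' : Type*} (mS : MeasurableSpace S) (mS' : MeasurableSpace S')
    (τ : L → S → @Measure S mS) (τ' : L → S' → @Measure S' mS') :
    L → S ⊕ S' → @Measure (S ⊕ S') (@Sum.instMeasurableSpace S S' mS mS') :=
  fun a r =>
    match r with
    | Sum.inl u => @Measure.map S (S ⊕ S') mS (@Sum.instMeasurableSpace S S' mS mS')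
        Sum.inl (τ a u)
    | Sum.inr v => @Measure.map S' (S ⊕ S') mS' (@Sum.instMeasurableSpace S S' mS mS')
        Sum.inr (τ' a v)

/-- if f : S → S' is a zig-zag morphism of LMPs, then the
equivalence relation on S ⊕ S' generated by the pairs (s, f(s)) is a state
bisimulation on the direct sum. -/
theorem zigzag_generates_state_bisim {L S S' : Type*}
    (mS : MeasurableSpace S) (mS' : MeasurableSpace S')
    (τ : L → S → @Measure S mS) (τ' : L → S' → @Measure S' mS')
    (hsub : ∀ a s, τ a s Set.univ ≤ 1) (hsub' : ∀ a s, τ' a s Set.univ ≤ 1)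
    (hmeas : ∀ (a : L) (A : Set S), MeasurableSet[mS] A →
      @Measurable S ℝ≥0∞ mS _ fun s => τ a s A)
    (hmeas' : ∀ (a : L) (A : Set S'), MeasurableSet[mS'] A →
      @Measurable S' ℝ≥0∞ mS' _ fun s => τ' a s A)
    (f : S → S')
    (hfsurj : Function.Surjective f)
    (hfmeas : @Measurable S S' mS mS' f)
    (hfzig : ∀ (a : L) (s : S) (Q : Set S'), MeasurableSet[mS'] Q →
      τ a s (f ⁻¹' Q) = τ' a (f s) Q) :
    IsStateBisim (@Sum.instMeasurableSpace S S' mS mS') (sumKern mS mS' τ τ')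
      (Relation.EqvGen fun u v => ∃ s : S, u = Sum.inl s ∧ v = Sum.inr (f s)) := by
  letI := mS; letI := mS'
  constructor
  · exact fun _ _ h => (Relation.EqvGen.is_equivalence _).symm h
  · intro u v h a Q hQ hcl
    have key : ∀ s : S, sumKern mS mS' τ τ' a (Sum.inl s) Q
        = sumKern mS mS' τ τ' a (Sum.inr (f s)) Q := by
      intro s
      have hQ' : MeasurableSet[mS'] (Sum.inr ⁻¹' Q) := measurable_inr hQ
      have hpre : Sum.inl ⁻¹' Q = f ⁻¹' (Sum.inr ⁻¹' Q) := by
        ext x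
        constructor
        · intro hx
          exact hcl _ hx _ (Relation.EqvGen.rel _ _ ⟨x, rfl, rfl⟩)
        · intro hx
          exact hcl _ hx _ (Relation.EqvGen.symm _ _ (Relation.EqvGen.rel _ _ ⟨x, rfl, rfl⟩))
      show Measure.map Sum.inl (τ a s) Q = Measure.map Sum.inr (τ' a (f s)) Q
      rw [Measure.map_apply measurable_inl hQ, Measure.map_apply measurable_inr hQ,
        hpre, hfzig a s _ hQ']
    induction h with
    | rel u v huv => obtain ⟨s, rfl, rfl⟩ := huv; exact key s
    | refl u => rfl
    | symm u v _ ih => exact ih.symm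
    | trans u v w _ _ ih1 ih2 => exact ih1.trans ih2


end
end

section
/- For every state bisimulation R on an LMP (S, 𝒮, (τ_a)), the family 𝒮(R) of R-closed sets in 𝒮 is a sub-σ-algebra of 𝒮, and the identity map Id : (S, 𝒮, (τ_a)) → (S, 𝒮(R), (τ_a)) is a zig-zag morphism; in particular each τ_a restricted to S × 𝒮(R) is a Markov kernel on (S, 𝒮(R)). -/
open MeasureTheory Set
open scoped ENNReal

noncomputable section

/-- for a state bisimulation R on an LMP (S, 𝒮, (τ_a)), the
family 𝒮(R) of R-closed measurable sets is a σ-algebra contained in 𝒮, and the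
identity map (S, 𝒮, (τ_a)) → (S, 𝒮(R), (τ_a)) is a zig-zag morphism; in
particular every τ_a restricted to S × 𝒮(R) is a Markov kernel on (S, 𝒮(R)),
i.e., s ↦ τ_a(s,Q) is 𝒮(R)-measurable for each Q ∈ 𝒮(R). -/
theorem closed_sets_sigma_algebra_and_id_zigzag {L S : Type*}
    (m : MeasurableSpace S) (τ : L → S → @Measure S m)
    (hsub : ∀ a s, τ a s Set.univ ≤ 1)
    (hmeas : ∀ (a : L) (A : Set S), MeasurableSet[m] A →
      @Measurable S ℝ≥0∞ m _ fun s => τ a s A)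
    (R : S → S → Prop) (hR : IsStateBisim m τ R) :
    ∃ mR : MeasurableSpace S,
      (∀ Q : Set S, MeasurableSet[mR] Q ↔ (MeasurableSet[m] Q ∧ RClosed R Q)) ∧
      mR ≤ m ∧
      (∀ (a : L) (s : S) (Q : Set S), MeasurableSet[mR] Q →
        τ a s (id ⁻¹' Q) = τ a s Q) ∧
      (∀ (a : L) (Q : Set S), MeasurableSet[mR] Q →
        @Measurable S ℝ≥0∞ mR _ fun s => τ a s Q) := by
  obtain ⟨hsym, hbis⟩ := hR
  refine ⟨{ MeasurableSet' := fun Q => MeasurableSet[m] Q ∧ RClosed R Q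
            measurableSet_empty := ⟨MeasurableSet.empty, fun u hu => hu.elim⟩
            measurableSet_compl := ?_
            measurableSet_iUnion := ?_ }, fun Q => Iff.rfl, ?_, ?_, ?_⟩
  · rintro Q ⟨hm, hc⟩
    exact ⟨hm.compl, fun u hu v huv hvQ => hu (hc v hvQ u (hsym huv))⟩
  · rintro f hf
    exact ⟨MeasurableSet.iUnion fun i => (hf i).1,
      fun u hu v huv => by
        obtain ⟨i, hi⟩ := mem_iUnion.1 hu
        exact mem_iUnion.2 ⟨i, (hf i).2 u hi v huv⟩⟩
  · intro Q hQ; exact hQ.1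
  · intro a s Q _; rfl
  · rintro a Q ⟨hQm, hQc⟩
    intro A hA
    refine ⟨hmeas a Q hQm hA, ?_⟩
    intro u hu v huv
    have : τ a u Q = τ a v Q := hbis u v huv a Q hQm hQc
    simpa [Set.mem_preimage, ← this] using hu
end
end

section
/- Assuming there exists a Δ¹₂ well-order W of ℝ of order type ω₁ (which follows from V = L), the set W' = W ∩ ((0,1) × (0,1)) is a well-order of (0,1) of order type ω₁ and is not Lebesgue measurable as a subset of (0,1)². -/
open MeasureTheory Set

/-- a subset W' of (0,1)² which well-orders (0,1) in order type
ω₁ (such a Δ¹₂ set exists under V = L) is not Lebesgue measurable as a subset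
of the plane. -/
theorem wellorder_not_measurable (W' : Set (ℝ × ℝ))
    (hsub : W' ⊆ Set.Ioo (0:ℝ) 1 ×ˢ Set.Ioo (0:ℝ) 1)
    (rel : ↥(Set.Ioo (0:ℝ) 1) → ↥(Set.Ioo (0:ℝ) 1) → Prop)
    (hrel : ∀ x y : ↥(Set.Ioo (0:ℝ) 1), rel x y ↔ ((x : ℝ), (y : ℝ)) ∈ W')
    (hwo : IsWellOrder ↥(Set.Ioo (0:ℝ) 1) rel)
    (htype : @Ordinal.type ↥(Set.Ioo (0:ℝ) 1) rel hwo = (Cardinal.aleph 1).ord) :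
    ¬ NullMeasurableSet W' (volume : Measure (ℝ × ℝ)) := by
  intro hW
  have hI : Set.Ioo (0:ℝ) 1 = Set.Ioo (0:ℝ) 1 := rfl
  -- initial segments are countable
  have hinit : ∀ b : ↥(Set.Ioo (0:ℝ) 1), Set.Countable {a : ↥(Set.Ioo (0:ℝ) 1) | rel a b} := by
    intro b
    have h1 : Ordinal.typein rel b < (Cardinal.aleph 1).ord :=
      htype ▸ Ordinal.typein_lt_type rel b
    have h2 : (Ordinal.typein rel b).card < Cardinal.aleph 1 := Cardinal.lt_ord.mp h1
    rw [Cardinal.countable_iff_lt_aleph_one]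
    exact (Ordinal.card_typein b).trans_lt h2
  -- vertical sections of the swap are countable
  have hvert : ∀ x : ℝ, Set.Countable {y : ℝ | (y, x) ∈ W'} := by
    intro x
    by_cases hx : x ∈ Set.Ioo (0:ℝ) 1
    · have : {y : ℝ | (y, x) ∈ W'} ⊆ Subtype.val '' {a : ↥(Set.Ioo (0:ℝ) 1) | rel a ⟨x, hx⟩} := by
        intro y hy
        have hyI := (hsub hy).1
        exact ⟨⟨y, hyI⟩, (hrel ⟨y, hyI⟩ ⟨x, hx⟩).mpr hy, rfl⟩
      exact ((hinit ⟨x, hx⟩).image _).mono this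
    · have : {y : ℝ | (y, x) ∈ W'} = ∅ := by
        ext y; simp only [Set.mem_setOf_eq, Set.mem_empty_iff_false, iff_false]
        intro hy; exact hx (hsub hy).2
      rw [this]; exact Set.countable_empty
  -- horizontal sections are co-countable in I
  have hhoriz : ∀ x : ↥(Set.Ioo (0:ℝ) 1), Set.Countable {y : ℝ | y ∈ Set.Ioo (0:ℝ) 1 ∧ ((x : ℝ), y) ∉ W'} := by
    intro x
    have : {y : ℝ | y ∈ Set.Ioo (0:ℝ) 1 ∧ ((x : ℝ), y) ∉ W'} ⊆
        Subtype.val '' ({a : ↥(Set.Ioo (0:ℝ) 1) | rel a x} ∪ {x}) := by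
      rintro y ⟨hyI, hy⟩
      have hnrel : ¬ rel x ⟨y, hyI⟩ := fun h => hy ((hrel x ⟨y, hyI⟩).mp h)
      rcases (show rel ⟨y, hyI⟩ x ∨ ⟨y, hyI⟩ = x ∨ rel x ⟨y, hyI⟩ by by_contra hc; push_neg at hc; exact hc.2.1 (hwo.trichotomous _ _ hc.1 hc.2.2)) with h | h | h
      · exact ⟨⟨y, hyI⟩, Or.inl h, rfl⟩
      · exact ⟨⟨y, hyI⟩, Or.inr (by simp [h]), rfl⟩
      · exact absurd h hnrel
    exact (((hinit x).union (Set.countable_singleton x)).image _).mono this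
  -- horizontal sections have measure ≥ 1
  have hsecbig : ∀ x : ℝ, x ∈ Set.Ioo (0:ℝ) 1 → volume {y : ℝ | ((x : ℝ), y) ∈ W'} ≠ 0 := by
    intro x hx hzero
    have hC : volume {y : ℝ | y ∈ Set.Ioo (0:ℝ) 1 ∧ (x, y) ∉ W'} = 0 :=
      (hhoriz ⟨x, hx⟩).measure_zero volume
    have hIsub : Set.Ioo (0:ℝ) 1 ⊆ {y : ℝ | (x, y) ∈ W'} ∪ {y : ℝ | y ∈ Set.Ioo (0:ℝ) 1 ∧ (x, y) ∉ W'} := by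
      intro y hy
      by_cases h : (x, y) ∈ W'
      · exact Or.inl h
      · exact Or.inr ⟨hy, h⟩
    have := measure_mono (μ := (volume : Measure ℝ)) hIsub
    have h1 : volume (Set.Ioo (0:ℝ) 1) = 1 := by simp
    have h2 : volume ({y : ℝ | (x, y) ∈ W'} ∪ {y : ℝ | y ∈ Set.Ioo (0:ℝ) 1 ∧ (x, y) ∉ W'}) = 0 := by
      apply le_antisymm _ zero_le
      calc volume ({y : ℝ | (x, y) ∈ W'} ∪ {y : ℝ | y ∈ Set.Ioo (0:ℝ) 1 ∧ (x, y) ∉ W'})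
          ≤ volume {y : ℝ | (x, y) ∈ W'} + volume {y : ℝ | y ∈ Set.Ioo (0:ℝ) 1 ∧ (x, y) ∉ W'} :=
            measure_union_le _ _
        _ = 0 := by rw [hzero, hC, add_zero]
    rw [h2] at this
    rw [h1] at this
    exact one_ne_zero (le_antisymm this zero_le)
  -- now the measure-theoretic argument
  rw [Measure.volume_eq_prod] at hW
  obtain ⟨S, hWS, hSm, hae⟩ := hW.exists_measurable_superset_ae_eq
  have hps : MeasurePreserving Prod.swap
      ((volume : Measure ℝ).prod volume) ((volume : Measure ℝ).prod volume) :=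
    Measure.measurePreserving_swap
  -- the difference S \ W' is null
  have hdiff : (volume : Measure ℝ).prod volume (S \ W') = 0 := (ae_eq_set.mp hae).1
  -- swap everything
  have hdiff' : (volume : Measure ℝ).prod volume (Prod.swap ⁻¹' (S \ W')) = 0 := by
    rw [hps.measure_preimage (NullMeasurableSet.of_null hdiff)]; exact hdiff
  have hsecnull := Measure.measure_ae_null_of_prod_null hdiff'
  -- sections of swapped S are a.e. null
  have hS'null : (fun x => volume (Prod.mk x ⁻¹' (Prod.swap ⁻¹' S))) =ᵐ[volume] 0 := by
    filter_upwards [hsecnull] with x hx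
    simp only [Pi.zero_apply] at hx ⊢
    have hsubset : Prod.mk x ⁻¹' (Prod.swap ⁻¹' S) ⊆
        {y : ℝ | (y, x) ∈ W'} ∪ Prod.mk x ⁻¹' (Prod.swap ⁻¹' (S \ W')) := by
      intro y hy
      by_cases h : (y, x) ∈ W'
      · exact Or.inl h
      · exact Or.inr ⟨hy, h⟩
    apply le_antisymm _ zero_le
    calc volume (Prod.mk x ⁻¹' (Prod.swap ⁻¹' S))
        ≤ volume ({y : ℝ | (y, x) ∈ W'} ∪ Prod.mk x ⁻¹' (Prod.swap ⁻¹' (S \ W'))) :=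
          measure_mono hsubset
      _ ≤ volume {y : ℝ | (y, x) ∈ W'} + volume (Prod.mk x ⁻¹' (Prod.swap ⁻¹' (S \ W'))) :=
          measure_union_le _ _
      _ = 0 := by rw [(hvert x).measure_zero, hx, add_zero]
  have hS'meas : MeasurableSet (Prod.swap ⁻¹' S) := hSm.preimage measurable_swap
  have hS'zero : (volume : Measure ℝ).prod volume (Prod.swap ⁻¹' S) = 0 :=
    (Measure.measure_prod_null hS'meas).mpr hS'null
  have hSzero : (volume : Measure ℝ).prod volume S = 0 := by
    rw [← hps.measure_preimage hSm.nullMeasurableSet]; exact hS'zero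
  have hWzero : (volume : Measure ℝ).prod volume W' = 0 :=
    le_antisymm (hSzero ▸ measure_mono hWS) zero_le
  -- so a.e. horizontal section is null, contradiction
  have hae2 := Measure.measure_ae_null_of_prod_null hWzero
  have : volume (Set.Ioo (0:ℝ) 1) = 0 := by
    have hsubnull : Set.Ioo (0:ℝ) 1 ⊆ {x : ℝ | ¬ volume (Prod.mk x ⁻¹' W') = 0} := by
      intro x hx h
      exact hsecbig x hx (by simpa [Set.preimage] using h)
    refine measure_mono_null hsubnull ?_
    simpa [Filter.EventuallyEq, ae_iff] using hae2
  simp at this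
end
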